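/- Let r and m be positive integers with r dividing m and m/r even, let q = p^m for a prime p, and let k be an integer with 3 ≤ k ≤ p^r/2. Let S = {a_1, …, a_{2k}} be a set of 2k distinct elements of F_q all lying in the subfield of F_q with p^r elements (equivalently, a^{p^r} = a for every a ∈ S) and satisfying Σ_{i=1}^{2k} a_i ≠ 0. Set λ = (−Σ_{i=1}^{2k} a_i)^{−1}. Then each λ·u_i is a square in F_q, and for any choice of square roots v_i ∈ F_q^* with v_i² = λ·u_i (1 ≤ i ≤ 2k), the code C_k(S,v,∞) is a [2k+1,k]_q almost self-dual code (self-orthogonal of dimension k), and it is either an MDS code or an NMDS code. -/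

import Mathlib

/-!
Each `λ u_i` is fixed by `x ↦ x ^ p ^ r`, so it lies in the subfield with `p ^ r` elements; since
`m / r` is even, `2 (p ^ r - 1)` divides `q - 1`, which makes every element of that subfield a
square in `F_q`.

For `f, g ∈ V_k` the pairing of their codewords is `λ ∑ u_i (f g)(a_i) + f_k g_k`. Lagrange
interpolation gives `∑ u_i h(a_i) = h_{2k-1} + h_{2k} ∑ a_i` for `deg h ≤ 2k`, and
`(f g)_{2k-1} = 0`, so the pairing is `f_k g_k (λ ∑ a_i + 1) = 0`.

A nonzero `f ∈ V_k` has at most `k` roots, and at most `k - 1` when `f_k = 0`, so every nonzero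
codeword has weight at least `k + 1`, while the Singleton argument gives one of weight at most
`k + 2`. If some codeword has weight `k + 1`, its zero set has size `k = dim C`, and a functional
killing the restriction of `C` to that set is a dual codeword of weight at most `k`. Conversely,
pairing with codewords of nodal polynomials shows that no nonzero dual codeword has weight `< k`.
-/

open Polynomial Finset

noncomputable section

/-- Hamming weight of a vector. -/
def wt {F : Type*} [Field F] {N : ℕ} (w : Fin N → F) : ℕ := Set.ncard {i | w i ≠ 0}

/-- The code `C_k(S,v,∞)` as a set of vectors of length `n+1`. -/
def codeSet {F : Type*} [Field F] {n : ℕ} (a v : Fin n → F) (k : ℕ) :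
    Set (Fin (n + 1) → F) :=
  {w | ∃ f : F[X], f.natDegree ≤ k ∧ f.coeff (k - 1) = 0 ∧
    w = Fin.snoc (fun i => v i * f.eval (a i)) (f.coeff k)}

/-- The Euclidean dual of a set of vectors. -/
def dualSet {F : Type*} [Field F] {N : ℕ} (C : Set (Fin N → F)) : Set (Fin N → F) :=
  {y | ∀ x ∈ C, ∑ i, x i * y i = 0}

/-- A (nonzero) code has minimum distance `d`: some nonzero codeword has weight `d`
and every nonzero codeword has weight at least `d`. -/
def IsMinDist {F : Type*} [Field F] {N : ℕ} (C : Set (Fin N → F)) (d : ℕ) : Prop :=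
  (∃ w ∈ C, w ≠ 0 ∧ wt w = d) ∧ ∀ w ∈ C, w ≠ 0 → d ≤ wt w

/-- `u i = ∏_{j ≠ i} (a i - a j)⁻¹`. -/
def uCoeff {F : Type*} [Field F] {n : ℕ} (a : Fin n → F) (i : Fin n) : F :=
  ∏ j ∈ Finset.univ.erase i, (a i - a j)⁻¹

/-- The set of Schur (componentwise) products of elements of two codes. -/
def schurSet {F : Type*} [Field F] {N : ℕ} (C D : Set (Fin N → F)) : Set (Fin N → F) :=
  {w | ∃ c ∈ C, ∃ d ∈ D, w = c * d}

open scoped Classical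
open Module

lemma two_mul_sub_one_dvd_pow_sub_one {Q : ℕ} (hQ : Odd Q) (t : ℕ) :
    2 * (Q - 1) ∣ Q ^ (2 * t) - 1 := by
  obtain ⟨j, rfl⟩ := hQ
  have hsq : 2 * (2 * j + 1 - 1) ∣ (2 * j + 1) ^ 2 - 1 :=
    ⟨j + 1, Nat.sub_eq_of_eq_add (by rw [Nat.add_sub_cancel]; ring)⟩
  refine hsq.trans ?_
  simpa [pow_mul] using Nat.sub_dvd_pow_sub_pow ((2 * j + 1) ^ 2) 1 t

lemma isSquare_of_pow_eq_self {F : Type*} [Field F] [Fintype F] {Q t : ℕ}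
    (hcard : Fintype.card F = Q ^ (2 * t)) {x : F} (hx : x ^ Q = x) : IsSquare x := by
  by_cases hchar : ringChar F = 2
  · exact FiniteField.isSquare_of_char_two hchar x
  rcases eq_or_ne x 0 with rfl | hx0
  · exact IsSquare.zero
  have hodd : Odd (Q ^ (2 * t)) := by
    rw [← hcard, Nat.odd_iff]; exact FiniteField.odd_card_of_char_ne_two hchar
  have ht : t ≠ 0 := by
    rintro rfl
    simpa [hcard] using Fintype.one_lt_card (α := F)
  have hQ : Odd Q := (Nat.odd_pow_iff (by omega)).mp hodd
  have hQ1 : x ^ (Q - 1) = 1 := by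
    rw [pow_sub₀ x hx0 hQ.pos, hx, pow_one, mul_inv_cancel₀ hx0]
  obtain ⟨d, hd⟩ := two_mul_sub_one_dvd_pow_sub_one hQ t
  have hhalf : Fintype.card F / 2 = (Q - 1) * d := by
    rw [mul_assoc] at hd
    rw [hcard]
    have := hodd.pos
    omega
  rw [FiniteField.isSquare_iff hchar hx0, hhalf, pow_mul, hQ1, one_pow]

lemma map_uCoeff {F K : Type*} [Field F] [Field K] {n : ℕ} (φ : F →+* K) (a : Fin n → F)
    (i : Fin n) : φ (uCoeff a i) = uCoeff (φ ∘ a) i := by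
  simp [uCoeff, map_prod, map_inv₀, map_sub]

lemma isSquare_inv_neg_sum_mul_uCoeff {F : Type*} [Field F] [Fintype F] {p r t n : ℕ}
    [ExpChar F p] (hcard : Fintype.card F = (p ^ r) ^ (2 * t)) {a : Fin n → F}
    (hsub : ∀ i, a i ^ p ^ r = a i) (i : Fin n) : IsSquare ((-∑ i, a i)⁻¹ * uCoeff a i) := by
  refine isSquare_of_pow_eq_self hcard ?_
  have hfix : iterateFrobenius F p r ∘ a = a := funext hsub
  rw [← iterateFrobenius_def, map_mul, map_uCoeff, hfix, map_inv₀, map_neg, map_sum]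
  simp only [iterateFrobenius_def, hsub]

section LinearCode

variable {F : Type*} [Field F] {N : ℕ}

lemma wt_eq_card (w : Fin N → F) : wt w = #{i | w i ≠ 0} := by
  rw [wt, ← Set.ncard_coe_finset, coe_filter_univ]

@[simp] lemma wt_zero : wt (0 : Fin N → F) = 0 := by simp [wt]

lemma wt_le_card_of_eq_zero {w : Fin N → F} {T : Finset (Fin N)} (h : ∀ i ∉ T, w i = 0) :
    wt w ≤ #T := by
  rw [wt_eq_card]
  exact card_le_card fun i hi => by_contra fun hiT => (mem_filter.mp hi).2 (h i hiT)

lemma wt_add_card_eq_zero (w : Fin N → F) : wt w + #{i | w i = 0} = N := by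
  rw [wt_eq_card, add_comm, card_filter_add_card_filter_not, card_univ, Fintype.card_fin]

lemma wt_eq_wt_init_add (w : Fin (N + 1) → F) :
    wt w = wt (Fin.init w) + if w (Fin.last N) ≠ 0 then 1 else 0 := by
  rw [wt_eq_card, wt_eq_card, card_filter, card_filter, Fin.sum_univ_castSucc]
  rfl

lemma isMinDist_of_exists_le {C : Set (Fin N → F)} {d : ℕ} (hle : ∃ w ∈ C, w ≠ 0 ∧ wt w ≤ d)
    (hge : ∀ w ∈ C, w ≠ 0 → d ≤ wt w) : IsMinDist C d := by
  obtain ⟨w, hwC, hw0, hwd⟩ := hle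
  exact ⟨⟨w, hwC, hw0, le_antisymm hwd (hge w hwC hw0)⟩, hge⟩

variable (C : Submodule F (Fin N → F))

lemma Submodule.exists_mem_ne_zero_forall_eq_zero {T : Finset (Fin N)}
    (hT : #T < finrank F C) : ∃ w ∈ C, w ≠ 0 ∧ ∀ i ∈ T, w i = 0 := by
  let ρ := LinearMap.funLeft F F ((↑) : T → Fin N) ∘ₗ C.subtype
  have hker : LinearMap.ker ρ ≠ ⊥ := LinearMap.ker_ne_bot_of_finrank_lt (by simpa using hT)
  obtain ⟨⟨w, hwC⟩, hw, hw0⟩ := (Submodule.ne_bot_iff _).mp hker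
  exact ⟨w, hwC, fun h => hw0 (by simp [h]), fun i hi => congr_fun hw ⟨i, hi⟩⟩

lemma Submodule.exists_mem_dualSet_ne_zero_of_forall_eq_zero {Z : Finset (Fin N)}
    (hZ : finrank F C ≤ #Z) {w : Fin N → F} (hwC : w ∈ C) (hw0 : w ≠ 0)
    (hwZ : ∀ i ∈ Z, w i = 0) : ∃ y ∈ dualSet (C : Set (Fin N → F)), y ≠ 0 ∧ ∀ i ∉ Z, y i = 0 := by
  let ρ := LinearMap.funLeft F F ((↑) : Z → Fin N)
  have hker : 0 < finrank F (LinearMap.ker (ρ ∘ₗ C.subtype)) := by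
    refine Submodule.one_le_finrank_iff.mpr ((Submodule.ne_bot_iff _).mpr ⟨⟨w, hwC⟩, ?_, ?_⟩)
    · ext z; exact hwZ z z.2
    · simpa using hw0
  have hlt : LinearMap.range (ρ ∘ₗ C.subtype) < ⊤ := by
    refine Submodule.lt_top_of_finrank_lt_finrank ?_
    have := LinearMap.finrank_range_add_finrank_ker (ρ ∘ₗ C.subtype)
    simp only [Module.finrank_fintype_fun_eq_card, Fintype.card_coe]
    omega
  obtain ⟨φ, hφ, hle⟩ := Submodule.exists_le_ker_of_lt_top _ hlt
  let ψ := φ ∘ₗ ρ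
  have hψ : ∀ x, ψ x = ∑ i, x i * ψ fun j => if i = j then 1 else 0 := fun x => by
    simpa only [smul_eq_mul] using LinearMap.pi_apply_eq_sum_univ ψ x
  refine ⟨fun i => ψ fun j => if i = j then 1 else 0, fun x hx => ?_, fun hy => ?_, fun i hi => ?_⟩
  · rw [← hψ]; exact hle ⟨⟨x, hx⟩, rfl⟩
  · refine hφ (LinearMap.ext fun u => ?_)
    obtain ⟨x, rfl⟩ := LinearMap.funLeft_surjective_of_injective F F _ Subtype.val_injective u
    change ψ x = 0
    simp [hψ x, fun i => congr_fun hy i]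
  · have : ρ (fun j => if i = j then 1 else 0) = 0 := by
      ext z; simp [ρ, LinearMap.funLeft_apply, show i ≠ z from fun h => hi (h ▸ z.2)]
    simp [ψ, this]

lemma Submodule.exists_mem_ne_zero_wt_add_finrank_le (hC : 0 < finrank F C) :
    ∃ w ∈ C, w ≠ 0 ∧ wt w + finrank F C ≤ N + 1 := by
  have hCN : finrank F C ≤ N := by simpa using C.finrank_le
  obtain ⟨T, -, hT⟩ := exists_subset_card_eq (s := (univ : Finset (Fin N)))
    (n := finrank F C - 1) (by rw [card_univ, Fintype.card_fin]; omega)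
  obtain ⟨w, hwC, hw0, hwT⟩ := C.exists_mem_ne_zero_forall_eq_zero (T := T) (by omega)
  have hwt : wt w ≤ #Tᶜ := wt_le_card_of_eq_zero fun i hi => hwT i (by simpa using hi)
  rw [card_compl, Fintype.card_fin] at hwt
  exact ⟨w, hwC, hw0, by omega⟩

lemma Submodule.exists_mem_dualSet_ne_zero_wt_le {w : Fin N → F} (hwC : w ∈ C) (hw0 : w ≠ 0)
    (hw : wt w + finrank F C = N) :
    ∃ y ∈ dualSet (C : Set (Fin N → F)), y ≠ 0 ∧ wt y ≤ finrank F C := by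
  have hZ := wt_add_card_eq_zero w
  obtain ⟨y, hy, hy0, hyZ⟩ := C.exists_mem_dualSet_ne_zero_of_forall_eq_zero (Z := {i | w i = 0})
    (by omega) hwC hw0 (fun i hi => (mem_filter.mp hi).2)
  exact ⟨y, hy, hy0, (wt_le_card_of_eq_zero hyZ).trans (by omega)⟩

lemma Submodule.isMinDist_or_of_le_wt {d K : ℕ} (hK : finrank F C = K) (hN : N = d + K)
    (hK0 : 0 < K) (hd : ∀ w ∈ C, w ≠ 0 → d ≤ wt w)
    (hd' : ∀ y ∈ dualSet (C : Set (Fin N → F)), y ≠ 0 → K ≤ wt y) :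
    IsMinDist (C : Set (Fin N → F)) (d + 1) ∨
      (IsMinDist (C : Set (Fin N → F)) d ∧ IsMinDist (dualSet (C : Set (Fin N → F))) K) := by
  by_cases hlow : ∃ w ∈ C, w ≠ 0 ∧ wt w ≤ d
  · obtain ⟨w, hwC, hw0, hwd⟩ := hlow
    obtain ⟨y, hy, hy0, hyK⟩ :=
      C.exists_mem_dualSet_ne_zero_wt_le hwC hw0 (by have := hd w hwC hw0; omega)
    exact Or.inr ⟨isMinDist_of_exists_le ⟨w, hwC, hw0, hwd⟩ hd,
      isMinDist_of_exists_le ⟨y, hy, hy0, hK ▸ hyK⟩ hd'⟩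
  · push Not at hlow
    obtain ⟨w, hwC, hw0, hwd⟩ := C.exists_mem_ne_zero_wt_add_finrank_le (by omega)
    exact Or.inl (isMinDist_of_exists_le ⟨w, hwC, hw0, by omega⟩ hlow)

end LinearCode

lemma Polynomial.card_filter_eval_eq_zero_le {F ι : Type*} [Field F] [Fintype ι] {a : ι → F}
    (ha : Function.Injective a) {f : F[X]} (hf : f ≠ 0) :
    #{i | f.eval (a i) = 0} ≤ f.natDegree := by
  have h := card_le_degree_of_subset_roots (p := f) (Z := image a {i | f.eval (a i) = 0})
    (fun x hx => by
      obtain ⟨i, hi, rfl⟩ := mem_image.mp hx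
      exact (mem_roots hf).mpr (mem_filter.mp hi).2)
  rwa [card_image_of_injective _ ha] at h

section GRS

variable {F : Type*} [Field F] {n : ℕ} (a v : Fin n → F) (k : ℕ)

def grsEncode : F[X] →ₗ[F] (Fin (n + 1) → F) where
  toFun f := Fin.snoc (fun i => v i * f.eval (a i)) (f.coeff k)
  map_add' f g := by
    ext idx; refine Fin.lastCases ?_ (fun i => ?_) idx <;> simp [mul_add]
  map_smul' c f := by
    ext idx; refine Fin.lastCases ?_ (fun i => ?_) idx <;> simp [mul_left_comm]

@[simp] lemma grsEncode_castSucc (f : F[X]) (i : Fin n) :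
    grsEncode a v k f i.castSucc = v i * f.eval (a i) := by
  simp [grsEncode]

@[simp] lemma grsEncode_last (f : F[X]) : grsEncode a v k f (Fin.last n) = f.coeff k := by
  simp [grsEncode]

lemma sum_grsEncode_mul (f : F[X]) (y : Fin (n + 1) → F) :
    ∑ j, grsEncode a v k f j * y j =
      ∑ i, v i * f.eval (a i) * y i.castSucc + f.coeff k * y (Fin.last n) := by
  simp [Fin.sum_univ_castSucc]

lemma grsEncode_mem_codeSet {f : F[X]} (hf : f.natDegree ≤ k) (hfk : f.coeff (k - 1) = 0) :
    grsEncode a v k f ∈ codeSet a v k :=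
  ⟨f, hf, hfk, rfl⟩

variable {a v k}

lemma le_wt_grsEncode (ha : Function.Injective a) (hv : ∀ i, v i ≠ 0) {f : F[X]} (hf0 : f ≠ 0)
    (hf : f.natDegree ≤ k) : n + 1 ≤ wt (grsEncode a v k f) + k := by
  have hzeros := card_filter_eval_eq_zero_le ha hf0
  have hinit := wt_add_card_eq_zero (Fin.init (grsEncode a v k f))
  simp only [Fin.init, grsEncode_castSucc, mul_eq_zero, hv, false_or] at hinit
  have hdeg : f.coeff k = 0 → f.natDegree < k := fun hk =>
    lt_of_le_of_ne hf fun h => hf0 (leadingCoeff_eq_zero.mp (by rwa [leadingCoeff, h]))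
  rw [wt_eq_wt_init_add, grsEncode_last]
  split_ifs with hk <;> grind

lemma le_wt_of_mem_codeSet (ha : Function.Injective a) (hv : ∀ i, v i ≠ 0) {w : Fin (n + 1) → F}
    (hw : w ∈ codeSet a v k) (hw0 : w ≠ 0) : n + 1 ≤ wt w + k := by
  obtain ⟨f, hf, -, rfl⟩ := hw
  exact le_wt_grsEncode ha hv (fun h => hw0 (by rw [h]; exact map_zero (grsEncode a v k))) hf

end GRS

section Parametrization

variable {F : Type*} [Field F]

-- `V_k = {g + c X^k | deg g < k - 1}`
def vkParam (k : ℕ) : degreeLT F (k - 1) × F →ₗ[F] F[X] :=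
  (degreeLT F (k - 1)).subtype.coprod (LinearMap.toSpanSingleton F F[X] (X ^ k))

lemma vkParam_apply {k : ℕ} (p : degreeLT F (k - 1) × F) :
    vkParam k p = (p.1 : F[X]) + C p.2 * X ^ k := by
  simp [vkParam, smul_eq_C_mul]

lemma coeff_eq_zero_of_mem_degreeLT {m j : ℕ} {g : F[X]} (hg : g ∈ degreeLT F m) (hj : m ≤ j) :
    g.coeff j = 0 :=
  coeff_eq_zero_of_degree_lt ((mem_degreeLT.mp hg).trans_le (by exact_mod_cast hj))

lemma coeff_vkParam_self {k : ℕ} (p : degreeLT F (k - 1) × F) : (vkParam k p).coeff k = p.2 := by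
  rw [vkParam_apply, coeff_add, coeff_C_mul_X_pow, if_pos rfl,
    coeff_eq_zero_of_mem_degreeLT p.1.2 (Nat.sub_le k 1), zero_add]

lemma vkParam_injective (k : ℕ) : Function.Injective (vkParam (F := F) k) := by
  rw [← LinearMap.ker_eq_bot, LinearMap.ker_eq_bot']
  intro p hp
  have hc : p.2 = 0 := by rw [← coeff_vkParam_self, hp, coeff_zero]
  rw [vkParam_apply, hc, map_zero, zero_mul, add_zero] at hp
  exact Prod.ext (Subtype.ext hp) hc

lemma mem_range_vkParam {k : ℕ} (hk : 1 ≤ k) {f : F[X]} :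
    f ∈ LinearMap.range (vkParam k) ↔ f.natDegree ≤ k ∧ f.coeff (k - 1) = 0 := by
  constructor
  · rintro ⟨p, rfl⟩
    have hg := mem_degreeLT.mp p.1.2
    refine ⟨?_, ?_⟩
    · rw [vkParam_apply]
      refine natDegree_add_le_of_degree_le ?_ (natDegree_C_mul_X_pow_le _ _)
      exact natDegree_le_of_degree_le (hg.le.trans (by exact_mod_cast Nat.sub_le k 1))
    · rw [vkParam_apply, coeff_add, coeff_C_mul_X_pow, if_neg (by omega),
        coeff_eq_zero_of_mem_degreeLT p.1.2 le_rfl, add_zero]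
  · rintro ⟨hf, hfk⟩
    have hg : f - C (f.coeff k) * X ^ k ∈ degreeLT F (k - 1) := by
      rw [mem_degreeLT, degree_lt_iff_coeff_zero]
      intro j hj
      rw [coeff_sub, coeff_C_mul_X_pow]
      rcases (show j = k - 1 ∨ j = k ∨ k < j by omega) with rfl | rfl | hj
      · rw [if_neg (by omega), hfk, sub_zero]
      · rw [if_pos rfl, sub_self]
      · rw [if_neg hj.ne', coeff_eq_zero_of_natDegree_lt (hf.trans_lt hj), sub_zero]
    exact ⟨(⟨_, hg⟩, f.coeff k), by rw [vkParam_apply, sub_add_cancel]⟩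

lemma finrank_degreeLT_prod (k : ℕ) (hk : 1 ≤ k) : finrank F (degreeLT F (k - 1) × F) = k := by
  rw [Module.finrank_prod, (degreeLTEquiv F (k - 1)).finrank_eq, Module.finrank_fin_fun,
    Module.finrank_self]
  omega

end Parametrization

section Code

variable {F : Type*} [Field F] {n : ℕ} {a v : Fin n → F} {k : ℕ}

variable (a v k) in
def codeSubmodule : Submodule F (Fin (n + 1) → F) :=
  LinearMap.range (grsEncode a v k ∘ₗ vkParam k)

lemma coe_codeSubmodule (hk : 1 ≤ k) :
    (codeSubmodule a v k : Set (Fin (n + 1) → F)) = codeSet a v k := by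
  ext w
  constructor
  · rintro ⟨p, rfl⟩
    obtain ⟨hf, hfk⟩ := (mem_range_vkParam hk).mp ⟨p, rfl⟩
    exact grsEncode_mem_codeSet a v k hf hfk
  · rintro ⟨f, hf, hfk, rfl⟩
    obtain ⟨p, rfl⟩ := (mem_range_vkParam hk).mpr ⟨hf, hfk⟩
    exact ⟨p, rfl⟩

lemma finrank_codeSubmodule (ha : Function.Injective a) (hv : ∀ i, v i ≠ 0) (hk : 1 ≤ k)
    (hkn : k ≤ n) : finrank F (codeSubmodule a v k) = k := by
  have hinj : Function.Injective (grsEncode a v k ∘ₗ vkParam k) := by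
    rw [← LinearMap.ker_eq_bot, LinearMap.ker_eq_bot']
    intro p hp
    by_contra hp0
    have hf0 : vkParam k p ≠ 0 := fun h => hp0 (vkParam_injective k (h.trans (map_zero _).symm))
    have := le_wt_grsEncode ha hv hf0 ((mem_range_vkParam hk).mp ⟨p, rfl⟩).1
    rw [← LinearMap.comp_apply, hp, wt_zero] at this
    omega
  rw [codeSubmodule, LinearMap.finrank_range_of_inj hinj, finrank_degreeLT_prod k hk]

lemma le_wt_of_mem_dualSet (ha : Function.Injective a) (hv : ∀ i, v i ≠ 0)
    {y : Fin (n + 1) → F} (hy : y ∈ dualSet (codeSet a v k)) (hy0 : y ≠ 0) : k ≤ wt y := by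
  by_contra hlt
  refine hy0 ?_
  set T : Finset (Fin n) := {i | y i.castSucc ≠ 0}
  have hT : #T < k := by
    have hinitT : wt (Fin.init y) = #T := wt_eq_card _
    have := wt_eq_wt_init_add y
    split_ifs at this <;> omega
  have hinit : ∀ i : Fin n, y i.castSucc = 0 := by
    intro i₀
    by_contra hi₀
    have hi₀T : i₀ ∈ T := mem_filter.mpr ⟨mem_univ _, hi₀⟩
    -- `h` vanishes on the rest of the support of `y`, so pairing with its codeword isolates `y i₀`
    set h := Lagrange.nodal (T.erase i₀) a
    have hdeg : h.natDegree + 1 < k := by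
      rwa [Lagrange.natDegree_nodal, card_erase_of_mem hi₀T,
        Nat.sub_add_cancel (card_pos.mpr ⟨i₀, hi₀T⟩)]
    have hpair := hy _ (grsEncode_mem_codeSet a v k (f := h) (by omega)
      (coeff_eq_zero_of_natDegree_lt (by omega)))
    rw [sum_grsEncode_mul, coeff_eq_zero_of_natDegree_lt (by omega), zero_mul, add_zero,
      sum_eq_single i₀] at hpair
    · refine mul_ne_zero (mul_ne_zero (hv i₀) ?_) hi₀ hpair
      exact Lagrange.eval_nodal_not_at_node fun j hj => ha.ne (ne_of_mem_erase hj).symm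
    · intro i _ hi
      by_cases hiT : i ∈ T
      · rw [Lagrange.eval_nodal_at_node (mem_erase.mpr ⟨hi, hiT⟩), mul_zero, zero_mul]
      · rw [show y i.castSucc = 0 by simpa [T] using hiT, mul_zero]
    · simp
  have hlast : y (Fin.last n) = 0 := by
    have hpair := hy _ (grsEncode_mem_codeSet a v k (f := X ^ k) (natDegree_X_pow_le k)
      (by rw [coeff_X_pow, if_neg (by omega)]))
    simpa [sum_grsEncode_mul, hinit] using hpair
  ext j
  exact Fin.lastCases hlast (fun i => hinit i) j

end Code

section SelfOrthogonality

variable {F : Type*} [Field F] {n : ℕ} {a : Fin n → F}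

lemma sum_uCoeff_mul_eval_of_degree_lt (ha : Function.Injective a) {g : F[X]}
    (hg : g.degree < n) : ∑ i, uCoeff a i * g.eval (a i) = g.coeff (n - 1) := by
  have h := Lagrange.coeff_eq_sum (s := univ) ha.injOn (P := g) (by simpa using hg)
  rw [card_univ, Fintype.card_fin] at h
  rw [h]
  refine sum_congr rfl fun i _ => ?_
  rw [uCoeff, prod_inv_distrib, div_eq_mul_inv, mul_comm]

/-- Subtracting `h_n` times the nodal polynomial reduces to the interpolation case; the nodal
polynomial contributes `-∑ a_i` to the coefficient of `X^(n-1)`. -/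
lemma sum_uCoeff_mul_eval (ha : Function.Injective a) (hn : 0 < n) {h : F[X]}
    (hh : h.natDegree ≤ n) :
    ∑ i, uCoeff a i * h.eval (a i) = h.coeff (n - 1) + h.coeff n * ∑ i, a i := by
  set P := Lagrange.nodal univ a
  have hP : P.natDegree = n := by simp [P]
  have hlt : (h - C (h.coeff n) * P).degree < n := by
    rw [degree_lt_iff_coeff_zero]
    intro j hj
    rw [coeff_sub, coeff_C_mul]
    rcases hj.eq_or_lt with rfl | hj
    · rw [← hP, Lagrange.nodal_monic.coeff_natDegree, mul_one, sub_self]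
    · rw [coeff_eq_zero_of_natDegree_lt (hh.trans_lt hj),
        coeff_eq_zero_of_natDegree_lt (hP.trans_lt hj), mul_zero, sub_zero]
  have hPcoeff : P.coeff (n - 1) = -∑ i, a i := by
    simpa [P, Lagrange.nodal_eq] using prod_X_sub_C_coeff_card_pred univ a (by simpa using hn)
  have heval : ∀ i, (h - C (h.coeff n) * P).eval (a i) = h.eval (a i) := fun i => by
    simp [P, Lagrange.eval_nodal_at_node (mem_univ i)]
  rw [← sum_congr rfl fun i _ => congrArg (uCoeff a i * ·) (heval i),
    sum_uCoeff_mul_eval_of_degree_lt ha hlt, coeff_sub, coeff_C_mul, hPcoeff]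
  ring

lemma coeff_mul_two_mul_sub_one {k : ℕ} {f g : F[X]} (hf : f.natDegree ≤ k)
    (hfk : f.coeff (k - 1) = 0) (hg : g.natDegree ≤ k) (hgk : g.coeff (k - 1) = 0) :
    (f * g).coeff (2 * k - 1) = 0 := by
  rw [coeff_mul]
  refine sum_eq_zero fun x hx => ?_
  rw [HasAntidiagonal.mem_antidiagonal] at hx
  rcases (show k < x.1 ∨ k < x.2 ∨ x.1 = k - 1 ∨ x.2 = k - 1 by omega) with h | h | h | h
  · rw [coeff_eq_zero_of_natDegree_lt (hf.trans_lt h), zero_mul]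
  · rw [coeff_eq_zero_of_natDegree_lt (hg.trans_lt h), mul_zero]
  · rw [h, hfk, zero_mul]
  · rw [h, hgk, mul_zero]

lemma codeSet_subset_dualSet {k : ℕ} {a v : Fin (2 * k) → F} (ha : Function.Injective a)
    (hsum : ∑ i, a i ≠ 0) (hv2 : ∀ i, v i ^ 2 = (-∑ i, a i)⁻¹ * uCoeff a i) :
    codeSet a v k ⊆ dualSet (codeSet a v k) := by
  rintro _ ⟨f, hf, hfk, rfl⟩ _ ⟨g, hg, hgk, rfl⟩
  obtain ⟨i₀, -⟩ := exists_ne_zero_of_sum_ne_zero hsum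
  have hterm : ∀ i, v i * g.eval (a i) * (v i * f.eval (a i)) =
      (-∑ i, a i)⁻¹ * (uCoeff a i * (g * f).eval (a i)) := fun i => by
    rw [eval_mul]; linear_combination (g.eval (a i) * f.eval (a i)) * hv2 i
  have hprod := sum_uCoeff_mul_eval ha i₀.pos (h := g * f)
    ((natDegree_mul_le_of_le hg hf).trans (by omega))
  have htop : (g * f).coeff (2 * k) = g.coeff k * f.coeff k := by
    rw [two_mul]; exact coeff_mul_add_eq_of_natDegree_le hg hf
  rw [coeff_mul_two_mul_sub_one hg hgk hf hfk, htop] at hprod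
  change ∑ j, grsEncode a v k g j * grsEncode a v k f j = 0
  rw [sum_grsEncode_mul]
  simp only [grsEncode_castSucc, grsEncode_last, hterm, ← mul_sum, hprod]
  field_simp
  ring

end SelfOrthogonality

theorem stmt17_general {F : Type*} [Field F] [Fintype F] (p r m k : ℕ) (hp : p.Prime)
    (hr : 0 < r) (hrm : r ∣ m) (heven : 2 ∣ m / r)
    (hcard : Fintype.card F = p ^ m)
    (hk3 : 3 ≤ k)
    (a : Fin (2 * k) → F) (ha : Function.Injective a)
    (hsub : ∀ i, a i ^ (p ^ r) = a i)
    (hsum : ∑ i, a i ≠ 0)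
    (lam : F) (hlam : lam = (-(∑ i, a i))⁻¹) :
    (∀ i, ∃ w : F, w ^ 2 = lam * uCoeff a i) ∧
      ∀ v : Fin (2 * k) → F, (∀ i, v i ≠ 0) → (∀ i, v i ^ 2 = lam * uCoeff a i) →
        (codeSet a v k ⊆ dualSet (codeSet a v k) ∧
          Module.finrank F (Submodule.span F (codeSet a v k)) = k ∧
          (IsMinDist (codeSet a v k) (k + 2) ∨
            (IsMinDist (codeSet a v k) (k + 1) ∧
              IsMinDist (dualSet (codeSet a v k)) k))) := by
  have : Fact p.Prime := ⟨hp⟩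
  have : CharP F p := charP_of_card_eq_prime_pow hcard
  subst hlam
  refine ⟨fun i => ?_, fun v hv hv2 => ?_⟩
  · obtain ⟨s, rfl⟩ := hrm
    obtain ⟨t, ht⟩ := heven
    rw [Nat.mul_div_cancel_left s hr] at ht
    obtain ⟨w, hw⟩ := isSquare_inv_neg_sum_mul_uCoeff (by rw [hcard, ht, pow_mul]) hsub i
    exact ⟨w, by rw [hw, sq]⟩
  have hC := coe_codeSubmodule (a := a) (v := v) (k := k) (by omega)
  have hdim := finrank_codeSubmodule (k := k) ha hv (by omega) (by omega)
  rw [← hC]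
  refine ⟨hC ▸ codeSet_subset_dualSet ha hsum hv2, by rw [Submodule.span_eq, hdim], ?_⟩
  refine (codeSubmodule a v k).isMinDist_or_of_le_wt hdim (by ring) (by omega)
    (fun w hw hw0 => ?_) (fun y hy hy0 => le_wt_of_mem_dualSet ha hv (hC ▸ hy) hy0)
  have := le_wt_of_mem_codeSet ha hv (hC ▸ SetLike.mem_coe.mpr hw) hw0
  omega

theorem stmt17 {F : Type*} [Field F] [Fintype F] (p r m k : ℕ) (hp : p.Prime)
    (hr : 0 < r) (hm : 0 < m) (hrm : r ∣ m) (heven : 2 ∣ m / r)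
    (hcard : Fintype.card F = p ^ m)
    (hk3 : 3 ≤ k) (hk : k ≤ p ^ r / 2)
    (a : Fin (2 * k) → F) (ha : Function.Injective a)
    (hsub : ∀ i, a i ^ (p ^ r) = a i)
    (hsum : ∑ i, a i ≠ 0)
    (lam : F) (hlam : lam = (-(∑ i, a i))⁻¹) :
    (∀ i, ∃ w : F, w ^ 2 = lam * uCoeff a i) ∧
      ∀ v : Fin (2 * k) → F, (∀ i, v i ≠ 0) → (∀ i, v i ^ 2 = lam * uCoeff a i) →
        (codeSet a v k ⊆ dualSet (codeSet a v k) ∧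
          Module.finrank F (Submodule.span F (codeSet a v k)) = k ∧
          (IsMinDist (codeSet a v k) (k + 2) ∨
            (IsMinDist (codeSet a v k) (k + 1) ∧
              IsMinDist (dualSet (codeSet a v k)) k))) :=
  stmt17_general p r m k hp hr hrm heven hcard hk3 a ha hsub hsum lam hlam
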